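/- Sample complexity lower bound: let P, Q be probability distributions on a finite set, π ∈ (0,1/2], δ ∈ (0,π/16], and λ* = log((1−π)/δ)/(log((1−π)/δ)+log(π/δ)). If e_π(P^⊗n, Q^⊗n) ≤ δ for some n ∈ ℕ, then n ≥ (λ*/2) · log(π/δ) / log(1/β_{λ*}(P,Q)). -/

import Mathlib

open Real Finset

/-- Hellinger-λ affinity between two distributions on a finite set. -/
noncomputable def betaAff {X : Type*} [Fintype X] (l : ℝ) (P Q : X → ℝ) : ℝ :=
  ∑ x, P x ^ l * Q x ^ (1 - l)

/-- Optimal one-shot Bayes error with prior pr. -/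
noncomputable def bayesErr {X : Type*} [Fintype X] (pr : ℝ) (P Q : X → ℝ) : ℝ :=
  ∑ x, min (pr * P x) ((1 - pr) * Q x)

/-- n-fold product distribution. -/
noncomputable def prodD {X : Type*} (n : ℕ) (P : X → ℝ) : (Fin n → X) → ℝ :=
  fun v => ∏ i, P (v i)

/-- The optimal exponent λ* of the one-shot Bayes error lower bound. -/
noncomputable def lambdaStar (pr δ : ℝ) : ℝ :=
  Real.log ((1 - pr) / δ) / (Real.log ((1 - pr) / δ) + Real.log (pr / δ))

/-!
Split the outcomes according to which of `π P x` and `(1 - π) Q x` is smaller. Hölder's inequality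
on each part gives `π^λ (1-π)^(1-λ) β_λ(P,Q) ≤ e^λ (1-π)^(1-λ) + π^λ e^(1-λ)`, where `e = e_π(P,Q)`
is the overlap `∑ min`. The exponent `λ*` is chosen so that for `e = δ` the two terms coincide,
hence `e_π ≤ δ` forces `β_λ* ≤ 2 (δ/π)^λ*`. Applied to `P^⊗n, Q^⊗n`, whose affinity is
`β_λ*(P,Q)^n`, and using `2 (δ/π)^λ* ≤ (δ/π)^(λ*/2)` (as `λ* ≥ 1/2` and `δ/π ≤ 1/16`), this gives
`β_λ*(P,Q)^n ≤ (δ/π)^(λ*/2)`; take logarithms.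
-/

lemma sum_rpow_mul_rpow_one_sub_le {ι : Type*} (s : Finset ι) {a b : ι → ℝ}
    (ha : ∀ i, 0 ≤ a i) (hb : ∀ i, 0 ≤ b i) {l : ℝ} (hl0 : 0 < l) (hl1 : l < 1) :
    ∑ i ∈ s, a i ^ l * b i ^ (1 - l) ≤ (∑ i ∈ s, a i) ^ l * (∑ i ∈ s, b i) ^ (1 - l) := by
  have hl1' : 0 < 1 - l := sub_pos.mpr hl1
  have hpq : HolderConjugate (1 / l) (1 / (1 - l)) :=
    ⟨by simp only [one_div, inv_inv, inv_one]; ring, one_div_pos.mpr hl0, one_div_pos.mpr hl1'⟩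
  have h := inner_le_Lp_mul_Lq_of_nonneg s hpq
    (fun i _ => rpow_nonneg (ha i) l) (fun i _ => rpow_nonneg (hb i) (1 - l))
  have cancel : ∀ {t : ℝ} {c : ℝ}, 0 < t → 0 ≤ c → (c ^ t) ^ (1 / t) = c := fun ht hc => by
    rw [← rpow_mul hc, mul_one_div_cancel ht.ne', rpow_one]
  simpa only [cancel hl0 (ha _), cancel hl1' (hb _), one_div_one_div] using h

lemma sum_rpow_mul_rpow_one_sub_le_sum_min {ι : Type*} (s : Finset ι) {a b : ι → ℝ}
    (ha : ∀ i, 0 ≤ a i) (hb : ∀ i, 0 ≤ b i) {l : ℝ} (hl0 : 0 < l) (hl1 : l < 1) :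
    ∑ i ∈ s, a i ^ l * b i ^ (1 - l) ≤
      (∑ i ∈ s, min (a i) (b i)) ^ l * (∑ i ∈ s, b i) ^ (1 - l) +
        (∑ i ∈ s, a i) ^ l * (∑ i ∈ s, min (a i) (b i)) ^ (1 - l) := by
  classical
  have hl1' : 0 < 1 - l := sub_pos.mpr hl1
  set S := s.filter fun i => a i ≤ b i
  set T := s.filter fun i => ¬ a i ≤ b i
  have hmin : ∀ i, 0 ≤ min (a i) (b i) := fun i => le_min (ha i) (hb i)
  have sub_le {f : ι → ℝ} (hf : ∀ i, 0 ≤ f i) (U : Finset ι) (hU : U ⊆ s) :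
      ∑ i ∈ U, f i ≤ ∑ i ∈ s, f i :=
    sum_le_sum_of_subset_of_nonneg hU fun i _ _ => hf i
  have hS : ∑ i ∈ S, a i ≤ ∑ i ∈ s, min (a i) (b i) := by
    rw [sum_congr rfl fun i hi => (min_eq_left (mem_filter.mp hi).2).symm]
    exact sub_le hmin S (filter_subset _ s)
  have hT : ∑ i ∈ T, b i ≤ ∑ i ∈ s, min (a i) (b i) := by
    rw [sum_congr rfl fun i hi => (min_eq_right (not_le.mp (mem_filter.mp hi).2).le).symm]
    exact sub_le hmin T (filter_subset _ s)
  have hsum {f : ι → ℝ} (hf : ∀ i, 0 ≤ f i) (U : Finset ι) : 0 ≤ ∑ i ∈ U, f i :=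
    sum_nonneg fun i _ => hf i
  rw [← sum_filter_add_sum_filter_not s fun i => a i ≤ b i]
  refine add_le_add ((sum_rpow_mul_rpow_one_sub_le S ha hb hl0 hl1).trans ?_)
    ((sum_rpow_mul_rpow_one_sub_le T ha hb hl0 hl1).trans ?_)
  · exact mul_le_mul (rpow_le_rpow (hsum ha S) hS hl0.le)
      (rpow_le_rpow (hsum hb S) (sub_le hb S (filter_subset _ s)) hl1'.le)
      (rpow_nonneg (hsum hb S) _) (rpow_nonneg (hsum hmin s) _)
  · exact mul_le_mul (rpow_le_rpow (hsum ha T) (sub_le ha T (filter_subset _ s)) hl0.le)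
      (rpow_le_rpow (hsum hb T) hT hl1'.le)
      (rpow_nonneg (hsum hb T) _) (rpow_nonneg (hsum ha s) _)

lemma sum_prodD {X : Type*} [Fintype X] (n : ℕ) (P : X → ℝ) :
    ∑ v, prodD n P v = (∑ x, P x) ^ n := by
  classical
  simp only [prodD, sum_pow', Fintype.piFinset_univ]

lemma betaAff_prodD {X : Type*} [Fintype X] (l : ℝ) {P Q : X → ℝ}
    (hP : ∀ x, 0 ≤ P x) (hQ : ∀ x, 0 ≤ Q x) (n : ℕ) :
    betaAff l (prodD n P) (prodD n Q) = betaAff l P Q ^ n := by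
  classical
  simp only [betaAff, prodD, sum_pow', Fintype.piFinset_univ]
  refine sum_congr rfl fun v _ => ?_
  rw [← finsetProd_rpow _ _ (fun i _ => hP _) l, ← finsetProd_rpow _ _ (fun i _ => hQ _) (1 - l),
    ← prod_mul_distrib]

lemma betaAff_mul_mul {X : Type*} [Fintype X] (l : ℝ) {P Q : X → ℝ}
    (hP : ∀ x, 0 ≤ P x) (hQ : ∀ x, 0 ≤ Q x) {c d : ℝ} (hc : 0 ≤ c) (hd : 0 ≤ d) :
    betaAff l (fun x => c * P x) (fun x => d * Q x) = c ^ l * d ^ (1 - l) * betaAff l P Q := by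
  simp only [betaAff, mul_sum, mul_rpow hc (hP _), mul_rpow hd (hQ _)]
  exact sum_congr rfl fun x _ => by ring

lemma betaAff_le_of_bayesErr_le {X : Type*} [Fintype X] {P Q : X → ℝ}
    (hP0 : ∀ x, 0 ≤ P x) (hQ0 : ∀ x, 0 ≤ Q x) (hP1 : ∑ x, P x = 1) (hQ1 : ∑ x, Q x = 1)
    {pr δ l : ℝ} (hpr0 : 0 ≤ pr) (hpr1 : pr ≤ 1) (hl0 : 0 < l) (hl1 : l < 1)
    (he : bayesErr pr P Q ≤ δ) :
    pr ^ l * (1 - pr) ^ (1 - l) * betaAff l P Q ≤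
      δ ^ l * (1 - pr) ^ (1 - l) + pr ^ l * δ ^ (1 - l) := by
  have ha : ∀ x, 0 ≤ pr * P x := fun x => mul_nonneg hpr0 (hP0 x)
  have hb : ∀ x, 0 ≤ (1 - pr) * Q x := fun x => mul_nonneg (sub_nonneg.mpr hpr1) (hQ0 x)
  have he0 : 0 ≤ bayesErr pr P Q := sum_nonneg fun x _ => le_min (ha x) (hb x)
  rw [← betaAff_mul_mul l hP0 hQ0 hpr0 (sub_nonneg.mpr hpr1)]
  calc _ ≤ bayesErr pr P Q ^ l * (∑ x, (1 - pr) * Q x) ^ (1 - l) +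
        (∑ x, pr * P x) ^ l * bayesErr pr P Q ^ (1 - l) :=
        sum_rpow_mul_rpow_one_sub_le_sum_min univ ha hb hl0 hl1
    _ ≤ _ := by
        rw [← mul_sum, ← mul_sum, hP1, hQ1, mul_one, mul_one]
        gcongr

section lambdaStar

variable {pr δ : ℝ} (hδ : 0 < δ) (hδpr : δ < pr) (hpr : pr ≤ 1 / 2)
include hδ hδpr hpr

lemma lambdaStar_mem_Ico : lambdaStar pr δ ∈ Set.Ico (1 / 2) 1 := by
  have hB : 0 < log (pr / δ) := log_pos ((one_lt_div hδ).mpr hδpr)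
  have hBA : log (pr / δ) ≤ log ((1 - pr) / δ) :=
    log_le_log (div_pos (hδ.trans hδpr) hδ) (by gcongr; linarith)
  constructor
  · rw [lambdaStar, le_div_iff₀ (by linarith)]; linarith
  · rw [lambdaStar, div_lt_one (by linarith)]; linarith

lemma rpow_lambdaStar_mul_rpow_one_sub :
    δ ^ lambdaStar pr δ * (1 - pr) ^ (1 - lambdaStar pr δ) =
      pr ^ lambdaStar pr δ * δ ^ (1 - lambdaStar pr δ) := by
  have hpr0 : 0 < pr := hδ.trans hδpr
  have hpr1 : 0 < 1 - pr := by linarith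
  have hsum : log ((1 - pr) / δ) + log (pr / δ) ≠ 0 :=
    (add_pos (log_pos ((one_lt_div hδ).mpr (by linarith)))
      (log_pos ((one_lt_div hδ).mpr hδpr))).ne'
  rw [← exp_log (mul_pos (rpow_pos_of_pos hδ _) (rpow_pos_of_pos hpr1 _)),
    ← exp_log (mul_pos (rpow_pos_of_pos hpr0 _) (rpow_pos_of_pos hδ _))]
  congr 1
  rw [log_mul (rpow_pos_of_pos hδ _).ne' (rpow_pos_of_pos hpr1 _).ne',
    log_mul (rpow_pos_of_pos hpr0 _).ne' (rpow_pos_of_pos hδ _).ne',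
    log_rpow hδ, log_rpow hpr1, log_rpow hpr0, log_rpow hδ, lambdaStar]
  rw [log_div hpr1.ne' hδ.ne', log_div hpr0.ne' hδ.ne'] at hsum ⊢
  field_simp
  ring

lemma betaAff_lambdaStar_le_of_bayesErr_le {X : Type*} [Fintype X] {P Q : X → ℝ}
    (hP0 : ∀ x, 0 ≤ P x) (hQ0 : ∀ x, 0 ≤ Q x) (hP1 : ∑ x, P x = 1) (hQ1 : ∑ x, Q x = 1)
    (he : bayesErr pr P Q ≤ δ) :
    betaAff (lambdaStar pr δ) P Q ≤ 2 * (δ / pr) ^ lambdaStar pr δ := by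
  set l := lambdaStar pr δ
  have hpr0 : 0 < pr := hδ.trans hδpr
  obtain ⟨hl_half, hl1⟩ := lambdaStar_mem_Ico hδ hδpr hpr
  have h := betaAff_le_of_bayesErr_le hP0 hQ0 hP1 hQ1 hpr0.le (by linarith)
    (by linarith) hl1 he
  rw [← rpow_lambdaStar_mul_rpow_one_sub hδ hδpr hpr, ← two_mul, mul_right_comm,
    ← mul_assoc] at h
  have h' := le_of_mul_le_mul_right h (rpow_pos_of_pos (by linarith) (1 - l))
  rw [div_rpow hδ.le hpr0.le, mul_div_assoc', le_div_iff₀ (rpow_pos_of_pos hpr0 l)]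
  linarith

end lambdaStar

lemma two_mul_rpow_le_rpow_half {x l : ℝ} (hx0 : 0 < x) (hx : x ≤ 1 / 16) (hl : 1 / 2 ≤ l) :
    2 * x ^ l ≤ x ^ (l / 2) := by
  have hhalf : x ^ (l / 2) ≤ 1 / 2 :=
    calc x ^ (l / 2) ≤ x ^ (1 / 4 : ℝ) :=
          rpow_le_rpow_of_exponent_ge hx0 (by linarith) (by linarith)
      _ ≤ (1 / 16 : ℝ) ^ (1 / 4 : ℝ) := rpow_le_rpow hx0.le hx (by norm_num)
      _ = 1 / 2 := by
        rw [show (1 / 16 : ℝ) = (1 / 2) ^ (4 : ℝ) by norm_num, ← rpow_mul (by norm_num)]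
        norm_num
  have hsq : x ^ l = x ^ (l / 2) * x ^ (l / 2) := by rw [← rpow_add hx0]; ring_nf
  nlinarith [rpow_nonneg hx0.le (l / 2)]

lemma div_log_one_div_le_of_pow_le {β y : ℝ} {n : ℕ} (hβ0 : 0 ≤ β) (hβ1 : β < 1)
    (h : β ^ n ≤ y) : log (1 / y) / log (1 / β) ≤ n := by
  rcases hβ0.eq_or_lt with rfl | hβ
  · simp -- `log (1 / 0) = 0`, so the quotient is `0`
  have hlog : log (β ^ n) ≤ log y := log_le_log (pow_pos hβ n) h
  rw [log_pow] at hlog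
  rw [div_le_iff₀ (log_pos ((one_lt_div hβ).mpr hβ1)), one_div, one_div, log_inv, log_inv]
  linarith

theorem sample_complexity_lower_bound {X : Type*} [Fintype X]
    (P Q : X → ℝ) (hP0 : ∀ x, 0 ≤ P x) (hQ0 : ∀ x, 0 ≤ Q x)
    (hP1 : ∑ x, P x = 1) (hQ1 : ∑ x, Q x = 1)
    (pr δ : ℝ) (hpr : pr ∈ Set.Ioc (0 : ℝ) (1 / 2)) (hδ0 : 0 < δ) (hδ : δ ≤ pr / 16)
    (hβ : betaAff (lambdaStar pr δ) P Q < 1)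
    (n : ℕ) (hn : bayesErr pr (prodD n P) (prodD n Q) ≤ δ) :
    (n : ℝ) ≥ (lambdaStar pr δ / 2) * Real.log (pr / δ) /
      Real.log (1 / betaAff (lambdaStar pr δ) P Q) := by
  obtain ⟨hpr0, hpr⟩ := hpr
  have hδpr : δ < pr := by linarith
  set l := lambdaStar pr δ
  have hl : 1 / 2 ≤ l := (lambdaStar_mem_Ico hδ0 hδpr hpr).1
  have hx0 : 0 < δ / pr := div_pos hδ0 hpr0
  have hx : δ / pr ≤ 1 / 16 := by rw [div_le_iff₀ hpr0]; linarith
  have hPn : ∑ v, prodD n P v = 1 := by rw [sum_prodD, hP1, one_pow]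
  have hQn : ∑ v, prodD n Q v = 1 := by rw [sum_prodD, hQ1, one_pow]
  have hβn : betaAff l P Q ^ n ≤ (δ / pr) ^ (l / 2) := by
    rw [← betaAff_prodD l hP0 hQ0 n]
    calc _ ≤ 2 * (δ / pr) ^ l :=
          betaAff_lambdaStar_le_of_bayesErr_le hδ0 hδpr hpr (fun v => prod_nonneg fun i _ => hP0 _)
            (fun v => prod_nonneg fun i _ => hQ0 _) hPn hQn hn
      _ ≤ _ := two_mul_rpow_le_rpow_half hx0 hx hl
  have hβ0 : 0 ≤ betaAff l P Q :=
    sum_nonneg fun x _ => mul_nonneg (rpow_nonneg (hP0 x) _) (rpow_nonneg (hQ0 x) _)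
  have hlog : log (1 / (δ / pr) ^ (l / 2)) = l / 2 * log (pr / δ) := by
    rw [one_div, ← inv_rpow hx0.le, inv_div, log_rpow (div_pos hpr0 hδ0)]
  rw [ge_iff_le, ← hlog]
  exact div_log_one_div_le_of_pow_le hβ0 hβ hβn
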